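/- Let n ≥ 2 be an integer and k ≥ 1. Then v_5(σ_2(n)) = ∑_{p^α ∥ n, p ≡ ±1 (mod 5)} v_5(α+1) + ∑_{p^α ∥ n, p ≡ ±2 (mod 5), 2 ∣ α+1} ( v_5(α+1) + v_5(p² + 1) ). -/

import Mathlib

/-!
Since `σ₂` is multiplicative, `v₅(σ₂(n))` is the sum over `p ^ α ∥ n` of the valuations of
`σ₂(p ^ α) = ∑_{i ≤ α} (p²)ⁱ`, a geometric sum in `x = p²`. Modulo 5, `x` is `0`, `1` or `-1`.
For `x ≡ 0` the sum is `≡ 1`. For `x ≡ 1`, lifting the exponent in `(x - 1) · ∑ = x^(α+1) - 1`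
gives `v₅(α + 1)`. For `x ≡ -1` the sum is a unit when `α + 1` is odd, and when `α + 1 = 2m` it
factors as `(x + 1) · ∑_{i < m} (x²)ⁱ`, reducing to the previous case.
-/

open ArithmeticFunction Finset

theorem geom_sum_two_mul {R : Type*} [CommSemiring R] (x : R) (m : ℕ) :
    ∑ i ∈ range (2 * m), x ^ i = (x + 1) * ∑ i ∈ range m, (x ^ 2) ^ i := by
  induction m with
  | zero => simp
  | succ m ih =>
    rw [Nat.mul_succ, sum_range_succ, sum_range_succ, ih, sum_range_succ]
    ring

theorem padicValNat_finset_prod {ι : Type*} (q : ℕ) [Fact q.Prime] {s : Finset ι} {f : ι → ℕ}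
    (hf : ∀ i ∈ s, f i ≠ 0) : padicValNat q (∏ i ∈ s, f i) = ∑ i ∈ s, padicValNat q (f i) := by
  simp only [← Nat.factorization_def _ Fact.out, Nat.factorization_prod hf,
    Finsupp.coe_finsetSum, Finset.sum_apply]

theorem sigma_apply_prime_pow_eq_geom_sum {k p : ℕ} (hp : p.Prime) (α : ℕ) :
    sigma k (p ^ α) = ∑ i ∈ range (α + 1), (p ^ k) ^ i := by
  simp only [sigma_apply_prime_pow hp, ← pow_mul, mul_comm]

section GeomSum

variable {q : ℕ} [hq : Fact q.Prime] {x n : ℕ}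

theorem padicValNat_geom_sum_add_padicValNat_sub_one (hx : 1 < x) (hn : n ≠ 0) :
    padicValNat q (∑ i ∈ range n, x ^ i) + padicValNat q (x - 1) =
      padicValNat q (x ^ n - 1) := by
  have hsum : ∑ i ∈ range n, x ^ i ≠ 0 :=
    (sum_pos (fun i _ => by positivity) (nonempty_range_iff.mpr hn)).ne'
  rw [← geom_sum_mul_of_one_le hx.le, padicValNat.mul hsum (by omega)]

theorem padicValNat_geom_sum_of_dvd (hqx : q ∣ x) (hn : n ≠ 0) :
    padicValNat q (∑ i ∈ range n, x ^ i) = 0 := by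
  obtain ⟨m, rfl⟩ := Nat.exists_eq_succ_of_ne_zero hn
  refine padicValNat.eq_zero_of_not_dvd fun h => hq.out.one_lt.ne' (Nat.dvd_one.mp ?_)
  rw [sum_range_succ', pow_zero] at h
  exact (Nat.dvd_add_right (dvd_sum fun i _ => dvd_pow hqx i.succ_ne_zero)).mp h

variable (hq2 : Odd q)
include hq2

theorem padicValNat_geom_sum_of_dvd_sub_one (hx : 1 < x) (hqx : q ∣ x - 1) (hn : n ≠ 0) :
    padicValNat q (∑ i ∈ range n, x ^ i) = padicValNat q n := by
  have hqx' : ¬q ∣ x := fun h => hq.out.one_lt.ne'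
    (Nat.dvd_one.mp (by simpa [Nat.sub_sub_self hx.le] using Nat.dvd_sub h hqx))
  have hlte := padicValNat.pow_sub_pow hq2 hx (by simpa using hqx) hqx' hn
  have := padicValNat_geom_sum_add_padicValNat_sub_one (q := q) hx hn
  rw [one_pow] at hlte
  omega

theorem padicValNat_geom_sum_of_dvd_add_one_of_odd (hx : 1 < x) (hqx : q ∣ x + 1)
    (hn : Odd n) : padicValNat q (∑ i ∈ range n, x ^ i) = 0 := by
  refine padicValNat.eq_zero_of_not_dvd fun h => ?_
  have h1 : q ∣ x ^ n - 1 := h.trans (Dvd.intro _ (geom_sum_mul_of_one_le hx.le n))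
  have h2 : q ∣ x ^ n + 1 := hqx.trans (by simpa using hn.nat_add_dvd_pow_add_pow x 1)
  have h3 := Nat.dvd_sub h2 h1
  rw [show x ^ n + 1 - (x ^ n - 1) = 2 by have := Nat.one_le_pow n x (by omega); omega] at h3
  exact hq.out.ne_one ((Nat.coprime_two_left.mpr hq2).symm.eq_one_of_dvd h3)

theorem padicValNat_geom_sum_of_dvd_add_one_of_even (hx : 1 < x) (hqx : q ∣ x + 1)
    (hn : Even n) (hn0 : n ≠ 0) :
    padicValNat q (∑ i ∈ range n, x ^ i) = padicValNat q n + padicValNat q (x + 1) := by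
  obtain ⟨m, rfl⟩ := hn.two_dvd
  have hm : m ≠ 0 := by omega
  have hx2 : 1 < x ^ 2 := Nat.one_lt_pow two_ne_zero hx
  have hqx2 : q ∣ x ^ 2 - 1 := hqx.trans (Dvd.intro _ (Nat.sq_sub_sq x 1).symm)
  have hq2' : ¬q ∣ 2 := fun h =>
    hq.out.ne_one ((Nat.coprime_two_left.mpr hq2).symm.eq_one_of_dvd h)
  have hsum : ∑ i ∈ range m, (x ^ 2) ^ i ≠ 0 :=
    (sum_pos (fun i _ => by positivity) (nonempty_range_iff.mpr hm)).ne'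
  rw [geom_sum_two_mul, padicValNat.mul (by omega) hsum,
    padicValNat_geom_sum_of_dvd_sub_one hq2 hx2 hqx2 hm, padicValNat.mul two_ne_zero hm,
    padicValNat.eq_zero_of_not_dvd hq2', zero_add, add_comm]

end GeomSum

instance fact_prime_five : Fact (Nat.Prime 5) := ⟨Nat.prime_five⟩

theorem padicValNat_five_sigma_two_prime_pow {p : ℕ} (hp : p.Prime) (α : ℕ) :
    padicValNat 5 (sigma 2 (p ^ α)) =
      (if p % 5 = 1 ∨ p % 5 = 4 then padicValNat 5 (α + 1) else 0) +
      (if (p % 5 = 2 ∨ p % 5 = 3) ∧ 2 ∣ α + 1 then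
        padicValNat 5 (α + 1) + padicValNat 5 (p ^ 2 + 1) else 0) := by
  have h5 : Odd 5 := by decide
  have hx : 1 < p ^ 2 := Nat.one_lt_pow two_ne_zero hp.one_lt
  have hcases : p % 5 = 0 ∧ p ^ 2 % 5 = 0 ∨ (p % 5 = 1 ∨ p % 5 = 4) ∧ p ^ 2 % 5 = 1 ∨
      (p % 5 = 2 ∨ p % 5 = 3) ∧ p ^ 2 % 5 = 4 := by
    have hmod : p ^ 2 % 5 = (p % 5) ^ 2 % 5 := Nat.pow_mod p 2 5
    have : p % 5 < 5 := Nat.mod_lt _ (by norm_num)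
    interval_cases p % 5 <;> simp [hmod]
  rw [sigma_apply_prime_pow_eq_geom_sum hp]
  rcases hcases with ⟨h0, hx0⟩ | ⟨h1, hx1⟩ | ⟨h2, hx2⟩
  · rw [padicValNat_geom_sum_of_dvd (by omega) α.succ_ne_zero, if_neg (by omega),
      if_neg (by omega)]
  · rw [padicValNat_geom_sum_of_dvd_sub_one h5 hx (by omega) α.succ_ne_zero, if_pos h1,
      if_neg (by omega), add_zero]
  · rw [if_neg (by omega), zero_add]
    rcases Nat.even_or_odd (α + 1) with he | ho
    · rw [padicValNat_geom_sum_of_dvd_add_one_of_even h5 hx (by omega) he α.succ_ne_zero,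
        if_pos ⟨h2, he.two_dvd⟩]
    · rw [padicValNat_geom_sum_of_dvd_add_one_of_odd h5 hx (by omega) ho,
        if_neg fun h => Nat.not_even_iff_odd.mpr ho (even_iff_two_dvd.mpr h.2)]

theorem valuation_sigma_two_five_general (n : ℕ) :
    padicValNat 5 (sigma 2 n) =
      (∑ p ∈ n.primeFactors.filter (fun p : ℕ => p % 5 = 1 ∨ p % 5 = 4),
          padicValNat 5 (n.factorization p + 1)) +
      ∑ p ∈ n.primeFactors.filter
          (fun p : ℕ => (p % 5 = 2 ∨ p % 5 = 3) ∧ 2 ∣ n.factorization p + 1),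
        (padicValNat 5 (n.factorization p + 1) + padicValNat 5 (p ^ 2 + 1)) := by
  rcases eq_or_ne n 0 with rfl | hn
  · simp
  have hσ : ∀ p ∈ n.primeFactors, sigma 2 (p ^ n.factorization p) ≠ 0 := fun p hp =>
    (sigma_pos _ _ (pow_ne_zero _ (Nat.prime_of_mem_primeFactors hp).ne_zero)).ne'
  rw [isMultiplicative_sigma.multiplicative_factorization _ hn, Finsupp.prod,
    Nat.support_factorization, padicValNat_finset_prod 5 hσ,
    sum_congr rfl fun p hp =>
      padicValNat_five_sigma_two_prime_pow (Nat.prime_of_mem_primeFactors hp) _,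
    sum_add_distrib, sum_filter, sum_filter]

/-- Example: `v_5(σ_2(n))` formula. -/
theorem valuation_sigma_two_five (n k : ℕ) (hn : 2 ≤ n) (hk : 1 ≤ k) :
    padicValNat 5 (sigma 2 n) =
      (∑ p ∈ n.primeFactors.filter (fun p : ℕ => p % 5 = 1 ∨ p % 5 = 4),
          padicValNat 5 (n.factorization p + 1)) +
      ∑ p ∈ n.primeFactors.filter
          (fun p : ℕ => (p % 5 = 2 ∨ p % 5 = 3) ∧ 2 ∣ n.factorization p + 1),
        (padicValNat 5 (n.factorization p + 1) + padicValNat 5 (p ^ 2 + 1)) :=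
  valuation_sigma_two_five_general n
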